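/- arXiv:2401.09435 — 7 statements merged into one kernel-verified Lean document; each statement's English description precedes it below -/
import Mathlib

section
/- On binary frames Xᵢ = {T,F}, for any subsets Aᵢ ⊆ Xᵢ (i = 1,…,n), the conjunctive combination on the product space satisfies Bel_{X₁×⋯×Xₙ}(A₁ × ⋯ × Aₙ) = ∏ᵢ Bel_{Xᵢ}(Aᵢ) (conditional conjunctive independence for Cartesian-product events). -/
open Finset

/-!
A focal element `B₁ × ⋯ × Bₙ` of the combined mass lies inside `A₁ × ⋯ × Aₙ` iff every `Bᵢ ⊆ Aᵢ`
or some `Bᵢ` is empty; the second kind carries mass `0` because each `mᵢ ∅ = 0`. So the belief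
of the product is the sum of `∏ᵢ mᵢ(Bᵢ)` over all families with `Bᵢ ⊆ Aᵢ`, which factorises
as `∏ᵢ ∑_{Bᵢ ⊆ Aᵢ} mᵢ(Bᵢ)`.
-/

theorem Fintype.piFinset_subset_piFinset_iff {ι : Type*} [Fintype ι] [DecidableEq ι]
    {α : ι → Type*} {s t : ∀ i, Finset (α i)} :
    piFinset s ⊆ piFinset t ↔ (∀ i, s i ⊆ t i) ∨ ∃ i, s i = ∅ := by
  rw [← coe_subset, coe_piFinset, coe_piFinset, Set.univ_pi_subset_univ_pi_iff]
  simp only [coe_subset, coe_eq_empty]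

namespace DempsterShafer

open Fintype

variable {R : Type*} [CommSemiring R]

def bel {β : Type*} (m : Finset β → R) (A : Finset β) : R :=
  ∑ B ∈ A.powerset, m B

variable {ι : Type*} [Fintype ι] [DecidableEq ι] {α : ι → Type*}
  [∀ i, Fintype (α i)] [∀ i, DecidableEq (α i)]

/-- The conjunctive combination of the masses `m i` on the product frame. -/
def productMass (m : ∀ i, Finset (α i) → R) (E : Finset (∀ i, α i)) : R :=
  ∑ B ∈ univ.filter (fun B => piFinset B = E), ∏ i, m i (B i)

theorem bel_productMass_piFinset (m : ∀ i, Finset (α i) → R) (hm : ∀ i, m i ∅ = 0)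
    (A : ∀ i, Finset (α i)) :
    bel (productMass m) (piFinset A) = ∏ i, bel (m i) (A i) := by
  simp only [bel, productMass]
  rw [sum_fiberwise_eq_sum_filter, prod_univ_sum]
  refine (sum_subset (fun B hB => ?_) fun B hB hBA => ?_).symm
  · simp only [mem_filter, mem_univ, true_and, mem_powerset]
    exact piFinset_subset _ _ fun i => mem_powerset.1 (mem_piFinset.1 hB i)
  · simp only [mem_filter, mem_univ, true_and, mem_powerset,
      Fintype.piFinset_subset_piFinset_iff] at hB
    have hsub : ¬ ∀ i, B i ⊆ A i := by simpa only [mem_piFinset, mem_powerset] using hBA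
    obtain ⟨i, hi⟩ := hB.resolve_left hsub
    exact prod_eq_zero (mem_univ i) (by rw [hi, hm])

end DempsterShafer

theorem belief_product_factorisation_binary_general (n : ℕ) (m : Fin n → Finset Bool → ℝ)
    (h0 : ∀ i, m i ∅ = 0)
    (A : Fin n → Finset Bool) :
    (∑ E ∈ (Fintype.piFinset A).powerset,
        ∑ B ∈ (Finset.univ : Finset (Fin n → Finset Bool)).filter
          (fun B => Fintype.piFinset B = E), ∏ i, m i (B i))
      = ∏ i, ∑ B ∈ (A i).powerset, m i B :=
  DempsterShafer.bel_productMass_piFinset m h0 A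

/-- Conditional conjunctive independence on binary frames: for any subsets
`Aᵢ ⊆ Bool`, the belief of the Cartesian product `A₁ × ⋯ × Aₙ` under the
conjunctive combination on the product frame equals `∏ᵢ Belᵢ(Aᵢ)`. -/
theorem belief_product_factorisation_binary (n : ℕ) (m : Fin n → Finset Bool → ℝ)
    (h0 : ∀ i, m i ∅ = 0) (hnn : ∀ i A, 0 ≤ m i A)
    (h1 : ∀ i, ∑ A : Finset Bool, m i A = 1)
    (A : Fin n → Finset Bool) :
    (∑ E ∈ (Fintype.piFinset A).powerset,
        ∑ B ∈ (Finset.univ : Finset (Fin n → Finset Bool)).filter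
          (fun B => Fintype.piFinset B = E), ∏ i, m i (B i))
      = ∏ i, ∑ B ∈ (A i).powerset, m i B :=
  belief_product_factorisation_binary_general n m h0 A
end

section
/- The disjunctive combination of n belief functions on the binary frame X = {T,F}, computed on X^n, has at most 2^n + 1 focal elements: the complements {(x₁,…,xₙ)}^c of singleton tuples, with mass m({(x₁,…,xₙ)}^c) = ∏ᵢ mᵢ({xᵢ}^c), plus the whole space X^n carrying the remaining mass. -/
open Finset

def disMass (n : ℕ) (m : Fin n → Finset Bool → ℝ) (E : Finset (Fin n → Bool)) : ℝ :=
  ∑ A ∈ (Finset.univ : Finset (Fin n → Finset Bool)).filter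
      (fun A => Finset.univ.filter (fun f : Fin n → Bool => ∃ i, f i ∈ A i) = E),
    ∏ i, m i (A i)

private lemma disj_compl_filter {n : ℕ} (A : Fin n → Finset Bool) :
    (Finset.univ.filter (fun f : Fin n → Bool => ∃ i, f i ∈ A i))ᶜ
      = Fintype.piFinset (fun i => (A i)ᶜ) := by
  ext f
  simp [Fintype.mem_piFinset]

private lemma disj_piFinset_eq_singleton_iff {n : ℕ} (B : Fin n → Finset Bool)
    (x : Fin n → Bool) :
    Fintype.piFinset B = {x} ↔ ∀ i, B i = {x i} := by
  constructor
  · intro h i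
    have hx : x ∈ Fintype.piFinset B := h ▸ mem_singleton_self x
    ext b
    simp only [mem_singleton]
    constructor
    · intro hb
      have hmem : Function.update x i b ∈ Fintype.piFinset B := by
        rw [Fintype.mem_piFinset]
        intro j
        rcases eq_or_ne j i with rfl | hj
        · simpa using hb
        · rw [Function.update_of_ne hj]
          exact Fintype.mem_piFinset.mp hx j
      rw [h, mem_singleton] at hmem
      have := congrFun hmem i
      simpa using this
    · rintro rfl; exact Fintype.mem_piFinset.mp hx i
  · intro h
    have : B = fun i => {x i} := funext h
    subst this
    exact Fintype.piFinset_singleton x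

private lemma disj_U_eq_compl_singleton_iff {n : ℕ} (A : Fin n → Finset Bool)
    (x : Fin n → Bool) :
    Finset.univ.filter (fun f : Fin n → Bool => ∃ i, f i ∈ A i)
        = ({x} : Finset (Fin n → Bool))ᶜ
      ↔ A = fun i => ({x i} : Finset Bool)ᶜ := by
  rw [← compl_inj_iff, disj_compl_filter, compl_compl,
    disj_piFinset_eq_singleton_iff]
  constructor
  · intro h; funext i; rw [← compl_inj_iff, compl_compl]; exact h i
  · intro h i; rw [h]; simp

private lemma disj_mass_compl_singleton (n : ℕ) (m : Fin n → Finset Bool → ℝ)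
    (x : Fin n → Bool) :
    disMass n m (({x} : Finset (Fin n → Bool))ᶜ) = ∏ i, m i (({x i} : Finset Bool)ᶜ) := by
  unfold disMass
  have : (Finset.univ : Finset (Fin n → Finset Bool)).filter
      (fun A => Finset.univ.filter (fun f : Fin n → Bool => ∃ i, f i ∈ A i)
        = ({x} : Finset (Fin n → Bool))ᶜ)
      = {fun i => ({x i} : Finset Bool)ᶜ} := by
    ext A
    simp only [mem_filter, mem_univ, true_and, mem_singleton]
    exact disj_U_eq_compl_singleton_iff A x
  rw [this, sum_singleton]

/-- The disjunctive combination of `n` belief functions on `Bool` has at most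
`2^n + 1` focal elements: the complements of singleton tuples, with mass
`∏ᵢ mᵢ({xᵢ}ᶜ)`, plus the whole space carrying the remaining mass. -/
theorem disjunctive_binary_focal_elements (n : ℕ) (m : Fin n → Finset Bool → ℝ)
    (h0 : ∀ i, m i ∅ = 0) (hnn : ∀ i A, 0 ≤ m i A)
    (h1 : ∀ i, ∑ A : Finset Bool, m i A = 1) :
    (∀ x : Fin n → Bool,
      disMass n m (({x} : Finset (Fin n → Bool))ᶜ) = ∏ i, m i (({x i} : Finset Bool)ᶜ)) ∧
    (∀ E : Finset (Fin n → Bool), disMass n m E ≠ 0 →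
      (∃ x : Fin n → Bool, E = ({x} : Finset (Fin n → Bool))ᶜ) ∨ E = Finset.univ) ∧
    (disMass n m Finset.univ
      = 1 - ∑ x : Fin n → Bool, ∏ i, m i (({x i} : Finset Bool)ᶜ)) := by
  have claim1 := disj_mass_compl_singleton n m
  have claim2 : ∀ E : Finset (Fin n → Bool), disMass n m E ≠ 0 →
      (∃ x : Fin n → Bool, E = ({x} : Finset (Fin n → Bool))ᶜ) ∨ E = Finset.univ := by
    intro E hE
    obtain ⟨A, hAmem, hAne⟩ := Finset.exists_ne_zero_of_sum_ne_zero hE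
    rw [mem_filter] at hAmem
    have hUE : Finset.univ.filter (fun f : Fin n → Bool => ∃ i, f i ∈ A i) = E :=
      hAmem.2
    have hAi : ∀ i, A i ≠ ∅ := by
      intro i hi
      exact hAne (Finset.prod_eq_zero (mem_univ i) (by rw [hi]; exact h0 i))
    by_cases hEu : E = Finset.univ
    · exact Or.inr hEu
    left
    have hcompl : Eᶜ = Fintype.piFinset (fun i => (A i)ᶜ) := by
      rw [← hUE, disj_compl_filter]
    have hne : Eᶜ.Nonempty := by
      rw [Finset.nonempty_iff_ne_empty]
      intro h; exact hEu ((Finset.compl_eq_empty_iff E).mp h)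
    have hAic : ∀ i, (A i)ᶜ ≠ ∅ := by
      intro i hi
      obtain ⟨f, hf⟩ := hne
      rw [hcompl, Fintype.mem_piFinset] at hf
      have := hf i
      rw [hi] at this
      exact absurd this (Finset.notMem_empty _)
    have hsing : ∀ s : Finset Bool, s ≠ ∅ → sᶜ ≠ ∅ → s = {false} ∨ s = {true} := by
      decide
    have hbool : ∀ i, A i = ({(if A i = {false} then true else false)} : Finset Bool)ᶜ := by
      intro i
      rcases hsing (A i) (hAi i) (hAic i) with h | h <;> rw [h] <;> simp [h] <;> decide
    refine ⟨fun i => if A i = {false} then true else false, ?_⟩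
    rw [← hUE, disj_U_eq_compl_singleton_iff]
    funext i
    exact hbool i
  refine ⟨claim1, claim2, ?_⟩
  -- total mass is 1
  have htotal : ∑ A : Fin n → Finset Bool, ∏ i, m i (A i) = 1 := by
    have h2 : ∑ x ∈ Fintype.piFinset (fun _ : Fin n => (Finset.univ : Finset (Finset Bool))),
        ∏ i, m i (x i) = ∏ i, ∑ B ∈ (Finset.univ : Finset (Finset Bool)), m i B :=
      (Finset.prod_univ_sum _ _).symm
    rw [Fintype.piFinset_univ] at h2
    rw [h2]
    exact Finset.prod_eq_one (fun i _ => h1 i)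
  have hfib : ∑ E : Finset (Fin n → Bool), disMass n m E
      = ∑ A : Fin n → Finset Bool, ∏ i, m i (A i) := by
    exact Finset.sum_fiberwise_of_maps_to (fun A _ => mem_univ _) _
  set S : Finset (Finset (Fin n → Bool)) :=
    insert Finset.univ ((Finset.univ : Finset (Fin n → Bool)).image
      (fun x => ({x} : Finset (Fin n → Bool))ᶜ)) with hS
  have hsub : ∑ E : Finset (Fin n → Bool), disMass n m E = ∑ E ∈ S, disMass n m E := by
    symm
    apply Finset.sum_subset (Finset.subset_univ S)
    intro E _ hES
    by_contra hne
    rcases claim2 E hne with ⟨x, rfl⟩ | rfl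
    · exact hES (Finset.mem_insert_of_mem (Finset.mem_image_of_mem _ (mem_univ x)))
    · exact hES (Finset.mem_insert_self _ _)
  have hnotmem : Finset.univ ∉ (Finset.univ : Finset (Fin n → Bool)).image
      (fun x => ({x} : Finset (Fin n → Bool))ᶜ) := by
    rw [Finset.mem_image]
    rintro ⟨x, -, hx⟩
    have : x ∈ ({x} : Finset (Fin n → Bool))ᶜ := hx ▸ mem_univ x
    simp at this
  have hsumS : ∑ E ∈ S, disMass n m E
      = disMass n m Finset.univ + ∑ x : Fin n → Bool, ∏ i, m i (({x i} : Finset Bool)ᶜ) := by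
    rw [hS, Finset.sum_insert hnotmem, Finset.sum_image]
    · congr 1
      exact Finset.sum_congr rfl (fun x _ => claim1 x)
    · intro x _ y _ h
      have := congrArg (·ᶜ) h
      simpa using this
  have := htotal ▸ hfib
  rw [hsub, hsumS] at this
  linarith
end

section
/- For the disjunctive combination of two belief functions on a binary frame Θ = {x,y}, the resulting mass function is m_∪(x) = m₁(x)m₂(x), m_∪(y) = m₁(y)m₂(y), m_∪(Θ) = 1 − m₁(x)m₂(x) − m₁(y)m₂(y); consequently disjunctive combination commutes with affine (convex) combination: Bel ∪ (αBel′ + (1−α)Bel″) = α(Bel ∪ Bel′) + (1−α)(Bel ∪ Bel″) for α ∈ [0,1]. -/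
open Finset

/-- Disjunctive combination of two mass functions on the binary frame `Bool`. -/
def disComb (m₁ m₂ : Finset Bool → ℝ) (S : Finset Bool) : ℝ :=
  ∑ p ∈ (Finset.univ : Finset (Finset Bool × Finset Bool)).filter
      (fun p => p.1 ∪ p.2 = S), m₁ p.1 * m₂ p.2

/-- On the binary frame `Θ = {x, y}` (here `x = true`, `y = false`), the disjunctive
combination has mass `m_∪(x) = m₁(x)m₂(x)`, `m_∪(y) = m₁(y)m₂(y)`,
`m_∪(Θ) = 1 − m₁(x)m₂(x) − m₁(y)m₂(y)`; consequently disjunctive combination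
commutes with affine (convex) combination. -/
theorem disjunctive_binary_affine (m₁ m₂ m' m'' : Finset Bool → ℝ) (α : ℝ)
    (h₁0 : m₁ ∅ = 0) (h₁nn : ∀ A, 0 ≤ m₁ A) (h₁1 : ∑ A : Finset Bool, m₁ A = 1)
    (h₂0 : m₂ ∅ = 0) (h₂nn : ∀ A, 0 ≤ m₂ A) (h₂1 : ∑ A : Finset Bool, m₂ A = 1)
    (h'0 : m' ∅ = 0) (h'nn : ∀ A, 0 ≤ m' A) (h'1 : ∑ A : Finset Bool, m' A = 1)
    (h''0 : m'' ∅ = 0) (h''nn : ∀ A, 0 ≤ m'' A) (h''1 : ∑ A : Finset Bool, m'' A = 1)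
    (hα0 : 0 ≤ α) (hα1 : α ≤ 1) :
    disComb m₁ m₂ {true} = m₁ {true} * m₂ {true} ∧
    disComb m₁ m₂ {false} = m₁ {false} * m₂ {false} ∧
    disComb m₁ m₂ Finset.univ
      = 1 - m₁ {true} * m₂ {true} - m₁ {false} * m₂ {false} ∧
    ∀ S : Finset Bool,
      disComb m₁ (fun A => α * m' A + (1 - α) * m'' A) S
        = α * disComb m₁ m' S + (1 - α) * disComb m₁ m'' S := by
  have hu : (Finset.univ : Finset Bool) = {true, false} := rfl
  refine ⟨?_, ?_, ?_, ?_⟩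
  · rw [disComb, show (Finset.univ : Finset (Finset Bool × Finset Bool)).filter
        (fun p => p.1 ∪ p.2 = {true}) = {(∅,{true}),({true},∅),({true},{true})} from by decide]
    simp (config := { decide := true }) [Finset.sum_insert, Finset.mem_insert, h₁0, h₂0]
  · rw [disComb, show (Finset.univ : Finset (Finset Bool × Finset Bool)).filter
        (fun p => p.1 ∪ p.2 = {false}) = {(∅,{false}),({false},∅),({false},{false})} from by decide]
    simp (config := { decide := true }) [Finset.sum_insert, Finset.mem_insert, h₁0, h₂0]
  · have huniv : (Finset.univ : Finset (Finset Bool)) =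
        {∅, {false}, {true}, {true, false}} := by decide
    rw [huniv] at h₁1 h₂1
    simp (config := { decide := true }) [Finset.sum_insert, Finset.mem_insert, h₁0, h₂0]
      at h₁1 h₂1
    rw [hu, disComb, show (Finset.univ : Finset (Finset Bool × Finset Bool)).filter
        (fun p => p.1 ∪ p.2 = {true, false}) =
        {(∅,{true,false}),({false},{true}),({false},{true,false}),({true},{false}),
         ({true},{true,false}),({true,false},∅),({true,false},{false}),({true,false},{true}),
         ({true,false},{true,false})} from by decide]
    simp (config := { decide := true }) [Finset.sum_insert, Finset.mem_insert, h₁0, h₂0]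
    linear_combination (m₂ {false} + m₂ {true} + m₂ {true, false}) * h₁1 + h₂1
  · intro S
    rw [disComb, disComb, disComb, Finset.mul_sum, Finset.mul_sum, ← Finset.sum_add_distrib]
    exact Finset.sum_congr rfl fun p _ => by ring
end

section
/- On the binary frame Θ = {x,y}, Yager's combination rule satisfies: for any Bel with mass m, Bel ⓨ Bel_x = (m(x)+m(Θ), 0, m(y)), Bel ⓨ Bel_y = (0, m(y)+m(Θ), m(x)), and Bel ⓨ Bel_Θ = Bel, where vectors denote (m(x), m(y), m(Θ)); moreover Bel₁ ⓨ Bel₂ = m₂(x)(Bel₁ ⓨ Bel_x) + m₂(y)(Bel₁ ⓨ Bel_y) + m₂(Θ)(Bel₁ ⓨ Bel_Θ), i.e., Yager combination commutes with affine combination on binary frames. -/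
open Finset

/-- Yager's combination rule on the binary frame `Bool` (`x = true`, `y = false`):
the conflicting mass is reassigned to the whole frame. -/
def yager (m₁ m₂ : Finset Bool → ℝ) (A : Finset Bool) : ℝ :=
  if A = {true} then m₁ {true} * (1 - m₂ {false}) + m₁ Finset.univ * m₂ {true}
  else if A = {false} then m₁ {false} * (1 - m₂ {true}) + m₁ Finset.univ * m₂ {false}
  else if A = Finset.univ then
    m₁ {true} * m₂ {false} + m₁ {false} * m₂ {true} + m₁ Finset.univ * m₂ Finset.univ
  else 0

/-- The categorical mass function assigning all mass to `B`. -/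
def catMass (B A : Finset Bool) : ℝ := if A = B then 1 else 0

/-- On the binary frame, Yager combination with the categorical belief functions
`Bel_x`, `Bel_y`, `Bel_Θ` yields the stated mass vectors, and Yager combination
commutes with affine combination: `Bel₁ ⓨ Bel₂` is the affine combination of
`Bel₁ ⓨ Bel_x`, `Bel₁ ⓨ Bel_y`, `Bel₁ ⓨ Bel_Θ` with weights `m₂(x), m₂(y), m₂(Θ)`. -/
theorem yager_binary_affine (m₁ m₂ : Finset Bool → ℝ)
    (h₁0 : m₁ ∅ = 0) (h₁nn : ∀ A, 0 ≤ m₁ A) (h₁1 : ∑ A : Finset Bool, m₁ A = 1)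
    (h₂0 : m₂ ∅ = 0) (h₂nn : ∀ A, 0 ≤ m₂ A) (h₂1 : ∑ A : Finset Bool, m₂ A = 1) :
    (yager m₁ (catMass {true}) {true} = m₁ {true} + m₁ Finset.univ ∧
      yager m₁ (catMass {true}) {false} = 0 ∧
      yager m₁ (catMass {true}) Finset.univ = m₁ {false}) ∧
    (yager m₁ (catMass {false}) {true} = 0 ∧
      yager m₁ (catMass {false}) {false} = m₁ {false} + m₁ Finset.univ ∧
      yager m₁ (catMass {false}) Finset.univ = m₁ {true}) ∧
    (∀ A, yager m₁ (catMass Finset.univ) A = m₁ A) ∧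
    (∀ A, yager m₁ m₂ A
        = m₂ {true} * yager m₁ (catMass {true}) A
          + m₂ {false} * yager m₁ (catMass {false}) A
          + m₂ Finset.univ * yager m₁ (catMass Finset.univ) A) := by
  have e1 : ({true} : Finset Bool) ≠ {false} := by decide
  have e2 : ({true} : Finset Bool) ≠ Finset.univ := by decide
  have e3 : ({false} : Finset Bool) ≠ Finset.univ := by decide
  have e4 : (Finset.univ : Finset Bool) ≠ {true} := by decide
  have e5 : (Finset.univ : Finset Bool) ≠ {false} := by decide
  have e6 : (∅ : Finset Bool) ≠ {true} := by decide
  have e7 : (∅ : Finset Bool) ≠ {false} := by decide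
  have e8 : (∅ : Finset Bool) ≠ Finset.univ := by decide
  have hu : m₂ Finset.univ = 1 - m₂ {true} - m₂ {false} := by
    rw [show (Finset.univ : Finset (Finset Bool)) = {∅, {false}, {true}, Finset.univ} from by decide] at h₂1
    rw [Finset.sum_insert (by decide), Finset.sum_insert (by decide),
      Finset.sum_insert (by decide), Finset.sum_singleton] at h₂1
    linarith
  have hcase : ∀ A : Finset Bool, A = ∅ ∨ A = {true} ∨ A = {false} ∨ A = Finset.univ := by decide
  have hu' : m₂ ({true, false} : Finset Bool) = 1 - m₂ {true} - m₂ {false} := by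
    rw [show ({true, false} : Finset Bool) = Finset.univ from by decide]; exact hu
  refine ⟨⟨?_, ?_, ?_⟩, ⟨?_, ?_, ?_⟩, ?_, ?_⟩
  · simp +decide [yager, catMass]
  · simp +decide [yager, catMass]
  · simp +decide [yager, catMass]
  · simp +decide [yager, catMass]
  · simp +decide [yager, catMass]
  · simp +decide [yager, catMass]
  · intro A
    rcases hcase A with h | h | h | h <;> subst h <;>
      simp +decide [yager, catMass, h₁0]
  · intro A
    rcases hcase A with h | h | h | h <;> subst h <;>
      simp +decide [yager, catMass, hu, hu'] <;> ring
end

section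
/- In the binary frame Θ = {x,y}, for fixed Bel with mass m, all lines in the plane of mass coordinates joining a belief function Bel′ = (m′(x), m′(y)) to its disjunctive combination Bel ∪ Bel′ = (m(x)m′(x), m(y)m′(y)) with fixed first coordinate m′(x) intersect the horizontal axis {m(y) = 0} at the single point ( m′(x)(m(x) − m(y))/(1 − m(y)), 0 ), independent of m′(y). -/
/-- In the binary frame `Θ = {x,y}`, belief functions are points `(m(x), m(y))` of the
plane and disjunctive combination multiplies masses on singletons. The line joining
`Bel′ = (mx', my')` to `Bel ∪ Bel′ = (mx·mx', my·my')` meets the horizontal axis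
`{m(y) = 0}` at the point `(mx'·(mx − my)/(1 − my), 0)`, independently of `my'`:
the three points are collinear. -/
theorem disjunctive_lines_focus (mx my mx' my' : ℝ)
    (hx : 0 ≤ mx) (hy : 0 ≤ my) (hxy : mx + my ≤ 1)
    (hx' : 0 ≤ mx') (hy' : 0 ≤ my') (hxy' : mx' + my' ≤ 1)
    (hden : 1 - my ≠ 0) (hmx : mx ≠ 1) (hmx' : mx' ≠ 0) :
    (mx' * (mx - my) / (1 - my) - mx') * (my * my' - my')
      = (0 - my') * (mx * mx' - mx') := by
  field_simp
  ring
end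

section
/- For unnormalized belief functions on the binary frame Θ = {x,y}, the conjunctive combination of believability functions satisfies b ∩ b_∅ = b_∅, b ∩ b_Θ = b, b ∩ b_x = b(y)·b_∅ + (1 − b(y))·b_x, and b ∩ b_y = b(x)·b_∅ + (1 − b(x))·b_y, where b_A denotes the categorical believability function with all mass on A. -/
open Finset

/-- Conjunctive (unnormalised) combination of two mass functions on `Bool`:
the conflicting mass stays on `∅`. -/
def conjComb (m₁ m₂ : Finset Bool → ℝ) (S : Finset Bool) : ℝ :=
  ∑ p ∈ (Finset.univ : Finset (Finset Bool × Finset Bool)).filter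
      (fun p => p.1 ∩ p.2 = S), m₁ p.1 * m₂ p.2

/-- The believability function `b(A) = ∑_{∅ ⊆ B ⊆ A} m(B)` of an unnormalised BPA. -/
def blvb (m : Finset Bool → ℝ) (A : Finset Bool) : ℝ := ∑ B ∈ A.powerset, m B

lemma sum_finsetBool (f : Finset Bool → ℝ) :
    ∑ A : Finset Bool, f A = f ∅ + f {true} + f {false} + f {true, false} := by
  rw [show (Finset.univ : Finset (Finset Bool)) = {∅, {true}, {false}, {true, false}} from by
    decide]
  rw [Finset.sum_insert (by decide), Finset.sum_insert (by decide),
      Finset.sum_insert (by decide), Finset.sum_singleton]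
  ring

/-- For unnormalised belief functions on the binary frame `Θ = {x, y}` (`x = true`,
`y = false`), conjunctive combination of believability functions satisfies
`b ∩ b_∅ = b_∅`, `b ∩ b_Θ = b`, `b ∩ b_x = b(y)·b_∅ + (1 − b(y))·b_x`, and
`b ∩ b_y = b(x)·b_∅ + (1 − b(x))·b_y`. -/
theorem conjunctive_unnormalised_binary (m : Finset Bool → ℝ)
    (hnn : ∀ A, 0 ≤ m A) (h1 : ∑ A : Finset Bool, m A = 1) :
    (∀ A, blvb (conjComb m (catMass ∅)) A = blvb (catMass ∅) A) ∧
    (∀ A, blvb (conjComb m (catMass Finset.univ)) A = blvb m A) ∧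
    (∀ A, blvb (conjComb m (catMass {true})) A
        = blvb m {false} * blvb (catMass ∅) A
          + (1 - blvb m {false}) * blvb (catMass {true}) A) ∧
    (∀ A, blvb (conjComb m (catMass {false})) A
        = blvb m {true} * blvb (catMass ∅) A
          + (1 - blvb m {true}) * blvb (catMass {false}) A) := by
  rw [sum_finsetBool] at h1
  have hps1 : ({true} : Finset Bool).powerset = {∅, {true}} := by decide
  have hps2 : ({false} : Finset Bool).powerset = {∅, {false}} := by decide
  have hps3 : ({true, false} : Finset Bool).powerset = {∅, {true}, {false}, {true, false}} := by
    decide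
  have huniv : (Finset.univ : Finset Bool) = {true, false} := by decide
  rw [huniv]
  refine ⟨?_, ?_, ?_, ?_⟩ <;> intro A <;>
    (have hA : A = ∅ ∨ A = {true} ∨ A = {false} ∨ A = ({true, false} : Finset Bool) := by
      fin_cases A <;> decide) <;>
    rcases hA with rfl | rfl | rfl | rfl <;>
    simp only [blvb, conjComb, catMass, Finset.sum_filter, Fintype.sum_prod_type,
      sum_finsetBool, hps1, hps2, hps3, Finset.powerset_empty, Finset.sum_singleton] <;>
    simp (config := { decide := true }) [Finset.sum_insert] <;>
    linarith
end

section
/- The Dempster combination →Bel of the conditional embeddings of belief functions Bel₁,…,Bel_{|Ω|} defined on the disjoint partition classes Π₁,…,Π_{|Ω|} of Θ has the following properties: every focal element of →Bel is the union of exactly one focal element of each Belᵢ, with mass equal to the product of the individual masses, and the marginal of →Bel on the coarsening Ω is the vacuous belief function. -/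
open Finset

variable {Ω Θ : Type} [Fintype Ω] [DecidableEq Ω] [Fintype Θ] [DecidableEq Θ]

/-- Mass of the Dempster combination `→Bel` of the conditional embeddings of the
conditional mass functions `mc ω` (each supported on the partition class `P ω`)
into `Θ`: the embedding of a focal element `e` of `mc ω` is `e ∪ (P ω)ᶜ`, and the
focal elements of the combination are intersections of one embedded focal element
per `ω` (no normalisation is needed). -/
def embComb (P : Ω → Finset Θ) (mc : Ω → Finset Θ → ℝ) (E : Finset Θ) : ℝ :=
  ∑ e ∈ (Finset.univ : Finset (Ω → Finset Θ)).filter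
      (fun e => (Finset.univ.inf fun ω => e ω ∪ (P ω)ᶜ) = E), ∏ ω, mc ω (e ω)

/-- Outer reduction `ρ̄(E) = {ω : P ω ∩ E ≠ ∅}` of the refining. -/
def outerRed (P : Ω → Finset Θ) (E : Finset Θ) : Finset Ω :=
  Finset.univ.filter fun ω => (P ω ∩ E).Nonempty

lemma inf_eq_biUnion (P : Ω → Finset Θ)
    (hPdisj : ∀ ω ω', ω ≠ ω' → P ω ∩ P ω' = ∅)
    (hPcov : ∀ θ : Θ, ∃ ω, θ ∈ P ω) (e : Ω → Finset Θ) (he : ∀ ω, e ω ⊆ P ω) :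
    (Finset.univ.inf fun ω => e ω ∪ (P ω)ᶜ) = Finset.univ.biUnion e := by
  ext θ
  simp only [Finset.mem_inf, Finset.mem_union, Finset.mem_compl, Finset.mem_biUnion,
    Finset.mem_univ, true_and]
  constructor
  · intro h
    obtain ⟨ω, hω⟩ := hPcov θ
    rcases h ω trivial with h' | h'
    · exact ⟨ω, h'⟩
    · exact absurd hω h'
  · rintro ⟨ω, hω⟩ ω' _
    by_cases hww : ω' = ω
    · exact Or.inl (hww ▸ hω)
    · refine Or.inr fun hP => ?_
      have h0 := hPdisj ω' ω hww
      have : θ ∈ P ω' ∩ P ω := Finset.mem_inter.mpr ⟨hP, he ω hω⟩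
      simp_all

lemma biUnion_piece (P : Ω → Finset Θ)
    (hPdisj : ∀ ω ω', ω ≠ ω' → P ω ∩ P ω' = ∅)
    (e : Ω → Finset Θ) (he : ∀ ω, e ω ⊆ P ω) (ω : Ω) :
    Finset.univ.biUnion e ∩ P ω = e ω := by
  ext θ
  simp only [Finset.mem_inter, Finset.mem_biUnion, Finset.mem_univ, true_and]
  constructor
  · rintro ⟨⟨ω', hω'⟩, hP⟩
    by_cases hww : ω' = ω
    · exact hww ▸ hω'
    · exfalso
      have h0 := hPdisj ω' ω hww
      have : θ ∈ P ω' ∩ P ω := Finset.mem_inter.mpr ⟨he ω' hω', hP⟩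
      simp_all
  · exact fun h => ⟨⟨ω, h⟩, he ω h⟩

/-- The Dempster combination `→Bel` of the conditional embeddings of belief
functions defined on the disjoint partition classes `P ω` of `Θ` satisfies:
(1) every focal element is the union of exactly one focal element of each `mc ω`,
with mass the product of the individual masses; (2) its marginal on the coarsening
`Ω` is the vacuous belief function. -/
theorem embedded_combination_structure [Nonempty Ω] (P : Ω → Finset Θ)
    (hPne : ∀ ω, (P ω).Nonempty)
    (hPdisj : ∀ ω ω', ω ≠ ω' → P ω ∩ P ω' = ∅)
    (hPcov : ∀ θ : Θ, ∃ ω, θ ∈ P ω)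
    (mc : Ω → Finset Θ → ℝ)
    (hce : ∀ ω, mc ω ∅ = 0) (hcnn : ∀ ω e, 0 ≤ mc ω e)
    (hcsupp : ∀ ω e, mc ω e ≠ 0 → e ⊆ P ω)
    (hc1 : ∀ ω, ∑ e : Finset Θ, mc ω e = 1) :
    (∀ e : Ω → Finset Θ, (∀ ω, mc ω (e ω) ≠ 0) →
      embComb P mc (Finset.univ.biUnion e) = ∏ ω, mc ω (e ω)) ∧
    (∀ E : Finset Θ, embComb P mc E ≠ 0 →
      ∃ e : Ω → Finset Θ, (∀ ω, mc ω (e ω) ≠ 0) ∧ E = Finset.univ.biUnion e) ∧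
    (∀ S : Finset Ω,
      (∑ E ∈ (Finset.univ : Finset (Finset Θ)).filter (fun E => outerRed P E = S),
          embComb P mc E)
        = if S = (Finset.univ : Finset Ω) then 1 else 0) := by
  -- basic facts about nonzero products
  have hprod : ∀ e : Ω → Finset Θ, (∏ ω, mc ω (e ω)) ≠ 0 → ∀ ω, mc ω (e ω) ≠ 0 := by
    intro e h ω
    exact fun h0 => h (Finset.prod_eq_zero (Finset.mem_univ ω) h0)
  have hsub : ∀ e : Ω → Finset Θ, (∀ ω, mc ω (e ω) ≠ 0) → ∀ ω, e ω ⊆ P ω :=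
    fun e h ω => hcsupp ω (e ω) (h ω)
  have hne : ∀ e : Ω → Finset Θ, (∀ ω, mc ω (e ω) ≠ 0) → ∀ ω, (e ω).Nonempty := by
    intro e h ω
    rcases (e ω).eq_empty_or_nonempty with h0 | h0
    · exact absurd (h0 ▸ hce ω) (h ω)
    · exact h0
  have hinf : ∀ e : Ω → Finset Θ, (∀ ω, mc ω (e ω) ≠ 0) →
      (Finset.univ.inf fun ω => e ω ∪ (P ω)ᶜ) = Finset.univ.biUnion e :=
    fun e h => inf_eq_biUnion P hPdisj hPcov e (hsub e h)
  -- injectivity on nonzero configurations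
  have hinj : ∀ e e' : Ω → Finset Θ, (∀ ω, mc ω (e ω) ≠ 0) → (∀ ω, mc ω (e' ω) ≠ 0) →
      Finset.univ.biUnion e = Finset.univ.biUnion e' → e = e' := by
    intro e e' h h' hU
    funext ω
    have := biUnion_piece P hPdisj e (hsub e h) ω
    have h2 := biUnion_piece P hPdisj e' (hsub e' h') ω
    rw [← this, ← h2, hU]
  -- outer reduction of a nonzero union is everything
  have houter : ∀ e : Ω → Finset Θ, (∀ ω, mc ω (e ω) ≠ 0) →
      outerRed P (Finset.univ.biUnion e) = Finset.univ := by
    intro e h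
    apply Finset.eq_univ_of_forall
    intro ω
    simp only [outerRed, Finset.mem_filter, Finset.mem_univ, true_and]
    obtain ⟨θ, hθ⟩ := hne e h ω
    exact ⟨θ, Finset.mem_inter.mpr ⟨hsub e h ω hθ, Finset.mem_biUnion.mpr ⟨ω, Finset.mem_univ ω, hθ⟩⟩⟩
  refine ⟨?_, ?_, ?_⟩
  · -- part 1
    intro e he
    unfold embComb
    rw [Finset.sum_eq_single_of_mem e]
    · simp only [Finset.mem_filter, Finset.mem_univ, true_and]
      exact hinf e he
    · intro e' he' hne'
      by_contra h0
      have h0' := hprod e' h0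
      simp only [Finset.mem_filter, Finset.mem_univ, true_and] at he'
      rw [hinf e' h0'] at he'
      exact hne' (hinj e' e h0' he he')
  · -- part 2
    intro E hE
    unfold embComb at hE
    obtain ⟨e, hemem, h0⟩ := Finset.exists_ne_zero_of_sum_ne_zero hE
    have h0' := hprod e h0
    simp only [Finset.mem_filter, Finset.mem_univ, true_and] at hemem
    exact ⟨e, h0', by rw [← hemem, hinf e h0']⟩
  · -- part 3
    intro S
    unfold embComb
    rw [Finset.sum_fiberwise_eq_sum_filter]
    have hfilter : ∀ e : Ω → Finset Θ,
        ((Finset.univ.inf fun ω => e ω ∪ (P ω)ᶜ) ∈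
          (Finset.univ : Finset (Finset Θ)).filter (fun E => outerRed P E = S)) ↔
        outerRed P (Finset.univ.inf fun ω => e ω ∪ (P ω)ᶜ) = S := by
      intro e; simp
    by_cases hS : S = (Finset.univ : Finset Ω)
    · subst hS
      simp only [if_pos rfl]
      rw [Finset.sum_filter_of_ne]
      · have := Finset.prod_univ_sum (fun _ : Ω => (Finset.univ : Finset (Finset Θ)))
          (fun ω x => mc ω x)
        rw [Fintype.piFinset_univ] at this
        rw [← this]
        exact Finset.prod_eq_one fun ω _ => hc1 ω
      · intro e _ h0
        have h0' := hprod e h0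
        rw [hfilter, hinf e h0']
        exact houter e h0'
    · rw [if_neg hS]
      apply Finset.sum_eq_zero
      intro e hemem
      simp only [Finset.mem_filter, Finset.mem_univ, true_and] at hemem
      by_contra h0
      have h0' := hprod e h0
      rw [hinf e h0', houter e h0'] at hemem
      exact hS hemem.symm
end
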